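/- Let G be a graph with a perfect matching. An edge subset S ⊆ E(G) is a global forcing set of G if and only if S intersects the edge set of every nice cycle of G. -/

import Mathlib

open SimpleGraph

variable {V : Type*}

/-- `M` is a perfect matching of `G`, viewed as a set of edges. -/
def IsPM (G : SimpleGraph V) (M : Set (Sym2 V)) : Prop :=
  M ⊆ G.edgeSet ∧ ∀ v : V, ∃! e, e ∈ M ∧ v ∈ e

/-- `G` has a perfect matching. -/
def HasPM (G : SimpleGraph V) : Prop := ∃ M, IsPM G M

/-- `c` is an `M`-alternating cycle of `G`: a cycle in which every vertex of the
cycle lies on exactly one edge of the cycle belonging to `M`. -/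
def IsAltCycle (G : SimpleGraph V) (M : Set (Sym2 V)) {v : V} (c : G.Walk v v) : Prop :=
  c.IsCycle ∧ ∀ w ∈ c.support, ∃! e, e ∈ c.edges ∧ e ∈ M ∧ w ∈ e

/-- `S` is a forcing set of the perfect matching `M` of `G`. -/
def IsForcingSet (G : SimpleGraph V) (M S : Set (Sym2 V)) : Prop :=
  S ⊆ M ∧ ∀ M', IsPM G M' → S ⊆ M' → M' = M

/-- `S ⊆ E(G) \ M` is an anti-forcing set of `M`: `G - S` has a unique perfect matching. -/
def IsAntiForcingSet (G : SimpleGraph V) (M S : Set (Sym2 V)) : Prop :=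
  S ⊆ G.edgeSet \ M ∧ ∃! M', IsPM (G.deleteEdges S) M'

/-- `S` is a global forcing set of `G`. -/
def IsGFS (G : SimpleGraph V) (S : Set (Sym2 V)) : Prop :=
  S ⊆ G.edgeSet ∧ ∀ M M', IsPM G M → IsPM G M' → M ∩ S = M' ∩ S → M = M'

/-- `G` has a perfect matching avoiding the vertex set `A`, i.e. `G - A` has a p.m. -/
def PMAvoiding (G : SimpleGraph V) (A : Set V) : Prop :=
  ∃ M, M ⊆ G.edgeSet ∧ (∀ e ∈ M, ∀ v, v ∈ e → v ∉ A) ∧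
    ∀ v, v ∉ A → ∃! e, e ∈ M ∧ v ∈ e

/-- `c` is a nice cycle of `G`: `G - V(c)` has a perfect matching. -/
def IsNiceCycle (G : SimpleGraph V) {v : V} (c : G.Walk v v) : Prop :=
  c.IsCycle ∧ PMAvoiding G {w | w ∈ c.support}

/-- The global forcing number. -/
noncomputable def gf (G : SimpleGraph V) : ℕ :=
  sInf {k | ∃ S, IsGFS G S ∧ S.ncard = k}

/-- The anti-forcing number of a perfect matching `M`. -/
noncomputable def af (G : SimpleGraph V) (M : Set (Sym2 V)) : ℕ :=
  sInf {k | ∃ S, IsAntiForcingSet G M S ∧ S.ncard = k}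

/-- The maximum anti-forcing number. -/
noncomputable def Af (G : SimpleGraph V) : ℕ :=
  sSup {k | ∃ M, IsPM G M ∧ af G M = k}

/-- The forcing number of a perfect matching `M`. -/
noncomputable def fnum (G : SimpleGraph V) (M : Set (Sym2 V)) : ℕ :=
  sInf {k | ∃ S, IsForcingSet G M S ∧ S.ncard = k}

/-- The maximum forcing number. -/
noncomputable def Fnum (G : SimpleGraph V) : ℕ :=
  sSup {k | ∃ M, IsPM G M ∧ fnum G M = k}

/-! If `M ≠ M'` are perfect matchings, `M ∆ M'` is a disjoint union of cycles alternating between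
`M` and `M'`. The `M`-partner of a vertex on such a cycle `C` lies on `C`, so the remaining edges
of `M` form a perfect matching of `G - V(C)`: `C` is nice. Conversely, a nice cycle `C` is even,
because `G` and `G - V(C)` both have perfect matchings; so its edges split into two perfect
matchings of `V(C)`, and adding a perfect matching of `G - V(C)` to either of them gives two
perfect matchings of `G` whose symmetric difference is `E(C)`. The theorem follows since
`M ∩ S = M' ∩ S` exactly when `S` misses `M ∆ M'`. -/

def IsMatchingOn (N : Set (Sym2 V)) (A : Set V) : Prop :=
  (∀ e ∈ N, ∀ v ∈ e, v ∈ A) ∧ ∀ v ∈ A, ∃! e, e ∈ N ∧ v ∈ e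

lemma isPM_iff_isMatchingOn_univ {G : SimpleGraph V} {M : Set (Sym2 V)} :
    IsPM G M ↔ M ⊆ G.edgeSet ∧ IsMatchingOn M Set.univ := by
  simp [IsPM, IsMatchingOn]

lemma pmAvoiding_iff_exists_isMatchingOn {G : SimpleGraph V} {A : Set V} :
    PMAvoiding G A ↔ ∃ N ⊆ G.edgeSet, IsMatchingOn N Aᶜ := by
  simp [PMAvoiding, IsMatchingOn]

lemma IsMatchingOn.union {N N' : Set (Sym2 V)} {A A' : Set V} (h : IsMatchingOn N A)
    (h' : IsMatchingOn N' A') (hAA' : Disjoint A A') : IsMatchingOn (N ∪ N') (A ∪ A') := by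
  refine ⟨?_, ?_⟩
  · rintro e (he | he) v hv
    exacts [Or.inl (h.1 e he v hv), Or.inr (h'.1 e he v hv)]
  · rintro v (hv | hv)
    · obtain ⟨e, he, huniq⟩ := h.2 v hv
      refine ⟨e, ⟨Or.inl he.1, he.2⟩, ?_⟩
      rintro e' ⟨he' | he', hve'⟩
      · exact huniq e' ⟨he', hve'⟩
      · exact absurd (h'.1 e' he' v hve') (hAA'.notMem_of_mem_left hv)
    · obtain ⟨e, he, huniq⟩ := h'.2 v hv
      refine ⟨e, ⟨Or.inr he.1, he.2⟩, ?_⟩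
      rintro e' ⟨he' | he', hve'⟩
      · exact absurd (h.1 e' he' v hve') (hAA'.notMem_of_mem_right hv)
      · exact huniq e' ⟨he', hve'⟩

lemma existsUnique_mk_mem_of_existsUnique_mem {N : Set (Sym2 V)} {v : V}
    (h : ∃! e, e ∈ N ∧ v ∈ e) : ∃! w, s(v, w) ∈ N := by
  obtain ⟨e, ⟨he, hve⟩, huniq⟩ := h
  obtain ⟨w, rfl⟩ := Sym2.mem_iff_exists.mp hve
  exact ⟨w, he, fun w' hw' => Sym2.congr_right.mp (huniq _ ⟨hw', Sym2.mem_mk_left _ _⟩)⟩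

lemma IsMatchingOn.even_ncard [Finite V] {G : SimpleGraph V} {N : Set (Sym2 V)} {A : Set V}
    (hNG : N ⊆ G.edgeSet) (hN : IsMatchingOn N A) : Even A.ncard := by
  let M : G.Subgraph :=
    { verts := A
      Adj := fun v w => s(v, w) ∈ N
      adj_sub := fun h => hNG h
      edge_vert := fun h => hN.1 _ h _ (Sym2.mem_mk_left _ _)
      symm := ⟨fun v w h => by rwa [Sym2.eq_swap]⟩ }
  have hM : M.IsMatching := fun v hv => existsUnique_mk_mem_of_existsUnique_mem (hN.2 v hv)
  have := Fintype.ofFinite V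
  classical
  simpa [Set.ncard_eq_toFinset_card', M] using hM.even_card

section AlternateEdges

variable {n : ℕ} (x : ZMod n → V) (hn : 2 ∣ n)

/-- The edges `x i x (i + 1)` with `i` of parity `b`; parity is well defined on `ZMod n` since
`n` is even. -/
def alternateEdges (b : ZMod 2) : Set (Sym2 V) :=
  {e | ∃ i, ZMod.castHom hn (ZMod 2) i = b ∧ e = s(x i, x (i + 1))}

variable {x}

lemma mem_mk_add_one_iff (hx : x.Injective) {i j : ZMod n} :
    x j ∈ s(x i, x (i + 1)) ↔ i = j ∨ i = j - 1 := by
  rw [Sym2.mem_iff, hx.eq_iff, hx.eq_iff, eq_sub_iff_add_eq]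
  exact or_congr eq_comm eq_comm

lemma castHom_sub_one_eq_iff_ne (j : ZMod n) (b : ZMod 2) :
    ZMod.castHom hn (ZMod 2) (j - 1) = b ↔ ZMod.castHom hn (ZMod 2) j ≠ b := by
  rw [map_sub, map_one]
  generalize ZMod.castHom hn (ZMod 2) j = a
  revert a b
  decide

lemma alternateEdges_isMatchingOn (hx : x.Injective) (b : ZMod 2) :
    IsMatchingOn (alternateEdges x hn b) (Set.range x) := by
  refine ⟨?_, ?_⟩
  · rintro _ ⟨i, -, rfl⟩ v hv
    rcases Sym2.mem_iff.mp hv with rfl | rfl <;> exact Set.mem_range_self _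
  rintro _ ⟨j, rfl⟩
  -- the edge at `x j` of parity `b` starts at `j` or at `j - 1`, whichever has parity `b`
  set i₀ := if ZMod.castHom hn (ZMod 2) j = b then j else j - 1 with hi₀
  have hi₀_mem : i₀ = j ∨ i₀ = j - 1 := by
    rw [hi₀]; split_ifs <;> simp
  have hπi₀ : ZMod.castHom hn (ZMod 2) i₀ = b := by
    rw [hi₀]; split_ifs with h
    exacts [h, (castHom_sub_one_eq_iff_ne hn j b).mpr h]
  refine ⟨s(x i₀, x (i₀ + 1)), ⟨⟨i₀, hπi₀, rfl⟩, (mem_mk_add_one_iff hx).mpr hi₀_mem⟩, ?_⟩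
  rintro _ ⟨⟨i, hπi, rfl⟩, hj⟩
  suffices i = i₀ by rw [this]
  rcases (mem_mk_add_one_iff hx).mp hj with rfl | rfl
  · rw [hi₀, if_pos hπi]
  · rw [hi₀, if_neg ((castHom_sub_one_eq_iff_ne hn _ b).mp hπi)]

lemma mk_mem_alternateEdges_zero_notMem_one (hx : x.Injective) (h2n : 2 < n) :
    s(x 0, x 1) ∈ alternateEdges x hn 0 \ alternateEdges x hn 1 := by
  refine ⟨⟨0, map_zero _, by rw [zero_add]⟩, ?_⟩
  rintro ⟨i, hπi, he⟩
  rcases Sym2.eq_iff.mp he with ⟨h0, -⟩ | ⟨h0, h1⟩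
  · rw [← hx h0, map_zero] at hπi
    exact zero_ne_one hπi
  · have h2 : ((2 : ℕ) : ZMod n) = 0 := by
      rw [← hx h1] at h0
      push_cast
      linear_combination -hx h0
    rw [ZMod.natCast_eq_zero_iff] at h2
    exact absurd (Nat.le_of_dvd two_pos h2) (by omega)

end AlternateEdges

namespace SimpleGraph.Walk

variable {G : SimpleGraph V} {u : V}

def cycleVert (c : G.Walk u u) (i : ZMod c.length) : V :=
  c.getVert i.val

lemma getVert_mod_length (c : G.Walk u u) {k : ℕ} (hk : k ≤ c.length) :
    c.getVert (k % c.length) = c.getVert k := by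
  rcases hk.lt_or_eq with hk | rfl
  · rw [Nat.mod_eq_of_lt hk]
  · rw [Nat.mod_self, getVert_zero, getVert_length]

variable {c : G.Walk u u} [NeZero c.length]

lemma cycleVert_add_one (i : ZMod c.length) :
    c.cycleVert (i + 1) = c.getVert (i.val + 1) := by
  rw [cycleVert, ZMod.val_add, ZMod.val_one_eq_one_mod, Nat.add_mod_mod,
    getVert_mod_length _ (ZMod.val_lt i)]

lemma adj_cycleVert_add_one (i : ZMod c.length) :
    G.Adj (c.cycleVert i) (c.cycleVert (i + 1)) := by
  rw [cycleVert_add_one]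
  exact c.adj_getVert_succ (ZMod.val_lt i)

lemma mk_cycleVert_mem_edges (i : ZMod c.length) :
    s(c.cycleVert i, c.cycleVert (i + 1)) ∈ c.edges :=
  (mk_mem_edges_iff_exists c).mpr ⟨i.val, ZMod.val_lt i, by rw [cycleVert_add_one]; rfl⟩

lemma range_cycleVert : Set.range c.cycleVert = {w | w ∈ c.support} := by
  ext w
  simp only [Set.mem_range, Set.mem_ofPred_eq, mem_support_iff_exists_getVert]
  constructor
  · rintro ⟨i, rfl⟩
    exact ⟨i.val, rfl, (ZMod.val_lt i).le⟩
  · rintro ⟨k, rfl, hk⟩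
    exact ⟨k, by rw [cycleVert, ZMod.val_natCast, getVert_mod_length _ hk]⟩

lemma IsCycle.cycleVert_injective (hc : c.IsCycle) : c.cycleVert.Injective := by
  have hlt (i : ZMod c.length) : i.val ≤ c.length - 1 := Nat.le_sub_one_of_lt (ZMod.val_lt i)
  exact fun i j h => ZMod.val_injective _ (hc.getVert_injOn' (hlt i) (hlt j) h)

end SimpleGraph.Walk

open scoped symmDiff

lemma Set.inter_eq_inter_iff_disjoint_symmDiff {α : Type*} {s t u : Set α} :
    s ∩ u = t ∩ u ↔ Disjoint (s ∆ t) u := by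
  rw [Set.disjoint_iff_inter_eq_empty, inter_symmDiff_distrib_right]
  exact Set.symmDiff_eq_empty.symm

lemma IsNiceCycle.even_length [Finite V] {G : SimpleGraph V} (hG : HasPM G) {v : V}
    {c : G.Walk v v} (hc : IsNiceCycle G c) : Even c.length := by
  obtain ⟨hcyc, hAvoid⟩ := hc
  obtain ⟨N, hNG, hN⟩ := pmAvoiding_iff_exists_isMatchingOn.mp hAvoid
  obtain ⟨M, hM⟩ := hG
  obtain ⟨hMG, hM⟩ := isPM_iff_isMatchingOn_univ.mp hM
  have : NeZero c.length := ⟨by linarith [hcyc.three_le_length]⟩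
  have hV := hM.even_ncard hMG
  rw [Set.ncard_univ, ← Set.ncard_add_ncard_compl {w | w ∈ c.support}, ← Walk.range_cycleVert,
    Set.ncard_range_of_injective hcyc.cycleVert_injective, Nat.card_zmod,
    Walk.range_cycleVert] at hV
  exact (Nat.even_add.mp hV).mpr (hN.even_ncard hNG)

lemma IsNiceCycle.exists_isPM_ne [Finite V] {G : SimpleGraph V} (hG : HasPM G) {v : V}
    {c : G.Walk v v} (hc : IsNiceCycle G c) :
    ∃ M₁ M₂, IsPM G M₁ ∧ IsPM G M₂ ∧ M₁ ≠ M₂ ∧ M₁ ∆ M₂ ⊆ {e | e ∈ c.edges} := by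
  have h2 := (hc.even_length hG).two_dvd
  obtain ⟨hcyc, hAvoid⟩ := hc
  obtain ⟨N, hNG, hN⟩ := pmAvoiding_iff_exists_isMatchingOn.mp hAvoid
  have h3 := hcyc.three_le_length
  have : NeZero c.length := ⟨by omega⟩
  have hx := hcyc.cycleVert_injective
  set A : Set V := {w | w ∈ c.support}
  have hA : Set.range c.cycleVert = A := Walk.range_cycleVert
  have hE (b : ZMod 2) : IsPM G (alternateEdges c.cycleVert h2 b ∪ N) := by
    refine isPM_iff_isMatchingOn_univ.mpr ⟨Set.union_subset ?_ hNG, ?_⟩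
    · rintro _ ⟨i, -, rfl⟩
      exact c.adj_cycleVert_add_one i
    · rw [← Set.union_compl_self A, ← hA]
      exact (alternateEdges_isMatchingOn h2 hx b).union (hA ▸ hN) disjoint_compl_right
  have hEc (b : ZMod 2) : alternateEdges c.cycleVert h2 b ⊆ {e | e ∈ c.edges} := by
    rintro _ ⟨i, -, rfl⟩
    exact c.mk_cycleVert_mem_edges i
  obtain ⟨h0, h1⟩ := mk_mem_alternateEdges_zero_notMem_one h2 hx (by omega)
  refine ⟨_, _, hE 0, hE 1, fun h => ?_, ?_⟩
  · have hN0 : s(c.cycleVert 0, c.cycleVert 1) ∉ N := fun hN0 =>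
      hN.1 _ hN0 _ (Sym2.mem_mk_left _ _) (hA ▸ Set.mem_range_self 0)
    have h01 : s(c.cycleVert 0, c.cycleVert 1) ∈ alternateEdges c.cycleVert h2 1 ∪ N :=
      h ▸ Or.inl h0
    exact h1 (h01.resolve_right hN0)
  · rintro e (⟨he | he, hne⟩ | ⟨he | he, hne⟩)
    · exact hEc 0 he
    · exact absurd (Or.inr he) hne
    · exact hEc 1 he
    · exact absurd (Or.inr he) hne

lemma IsPM.pmAvoiding_of_closed {G : SimpleGraph V} {M : Set (Sym2 V)} {A : Set V}
    (hM : IsPM G M) (hA : ∀ a b, a ∈ A → s(a, b) ∈ M → b ∈ A) : PMAvoiding G A := by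
  refine pmAvoiding_iff_exists_isMatchingOn.mpr
    ⟨{e ∈ M | ∀ w ∈ e, w ∉ A}, fun e he => hM.1 he.1, fun e he w hw => he.2 w hw, fun w hw => ?_⟩
  obtain ⟨e, ⟨he, hwe⟩, huniq⟩ := hM.2 w
  refine ⟨e, ⟨⟨he, ?_⟩, hwe⟩, fun e' he' => huniq e' ⟨he'.1.1, he'.2⟩⟩
  obtain ⟨b, rfl⟩ := Sym2.mem_iff_exists.mp hwe
  intro z hz
  rcases Sym2.mem_iff.mp hz with rfl | rfl
  · exact hw
  · exact fun hb => hw (hA _ _ hb (Sym2.eq_swap ▸ he))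

lemma IsPM.mem_symmDiff_of_mem {G : SimpleGraph V} {M M' : Set (Sym2 V)} (hM : IsPM G M)
    (hM' : IsPM G M') {a : V} {e f : Sym2 V} (he : e ∈ M ∆ M') (hae : a ∈ e) (hf : f ∈ M)
    (haf : a ∈ f) : f ∈ M ∆ M' := by
  rcases Set.mem_symmDiff.mp he with ⟨heM, heM'⟩ | ⟨heM', heM⟩
  · rwa [(hM.2 a).unique ⟨hf, haf⟩ ⟨heM, hae⟩]
  · refine Or.inl ⟨hf, fun hfM' => heM ?_⟩
    rwa [(hM'.2 a).unique ⟨heM', hae⟩ ⟨hfM', haf⟩]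

lemma IsPM.isPerfectMatching_top {G : SimpleGraph V} {M : Set (Sym2 V)} (hM : IsPM G M) :
    (⊤ : (fromEdgeSet M).Subgraph).IsPerfectMatching := by
  rw [Subgraph.isPerfectMatching_iff]
  intro v
  simp only [Subgraph.top_adj, fromEdgeSet_adj]
  obtain ⟨w, hw, huniq⟩ := existsUnique_mk_mem_of_existsUnique_mem (hM.2 v)
  exact ⟨w, ⟨hw, (hM.1 hw).ne⟩, fun w' hw' => huniq w' hw'.1⟩

lemma IsPM.isCycles_fromEdgeSet_symmDiff {G : SimpleGraph V} {M M' : Set (Sym2 V)}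
    (hM : IsPM G M) (hM' : IsPM G M') : (fromEdgeSet (M ∆ M')).IsCycles := by
  have := hM.isPerfectMatching_top.symmDiff_isCycles hM'.isPerfectMatching_top
  rw [Subgraph.spanningCoe_top, Subgraph.spanningCoe_top, symmDiff_def] at this
  rwa [Set.symmDiff_def, fromEdgeSet_union, fromEdgeSet_sdiff, fromEdgeSet_sdiff]

lemma IsPM.exists_isNiceCycle_of_ne [Finite V] {G : SimpleGraph V} {M M' : Set (Sym2 V)}
    (hM : IsPM G M) (hM' : IsPM G M') (hne : M ≠ M') :
    ∃ (v : V) (c : G.Walk v v), IsNiceCycle G c ∧ {e | e ∈ c.edges} ⊆ M ∆ M' := by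
  classical
  have := Fintype.ofFinite V
  set D := fromEdgeSet (M ∆ M')
  have hD := hM.isCycles_fromEdgeSet_symmDiff hM'
  have hDG : D ≤ G := fun a b h => by
    rcases h.1 with ⟨h, -⟩ | ⟨h, -⟩
    exacts [hM.1 h, hM'.1 h]
  obtain ⟨e, he⟩ := Set.symmDiff_nonempty.mpr hne
  induction e using Sym2.ind with | _ v w => ?_
  have hvw : D.Adj v w := by
    refine ⟨he, ?_⟩
    rcases he with ⟨h, -⟩ | ⟨h, -⟩
    exacts [(hM.1 h).ne, (hM'.1 h).ne]
  obtain ⟨p, hp, -⟩ := hD.exists_cycle_toSubgraph_verts_eq_connectedComponentSupp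
    (c := D.connectedComponentMk v) rfl ⟨w, hvw⟩
  refine ⟨v, p.mapLe hDG, ⟨hp.mapLe hDG, ?_⟩, ?_⟩
  · rw [Walk.support_mapLe_eq_support]
    refine hM.pmAvoiding_of_closed fun a b ha hab => ?_
    obtain ⟨z, hz⟩ : (p.toSubgraph.neighborSet a).Nonempty := Set.nonempty_of_ncard_ne_zero
      (by rw [hp.ncard_neighborSet_toSubgraph_eq_two ha]; norm_num)
    -- `a` lies on an edge of `D`, so its `M`-edge is an edge of `D` as well
    have hab' : D.Adj a b :=
      ⟨hM.mem_symmDiff_of_mem hM' hz.adj_sub.1 (Sym2.mem_mk_left _ _) hab (Sym2.mem_mk_left _ _),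
        (hM.1 hab).ne⟩
    have := (hp.adj_toSubgraph_iff_of_isCycles hD (p.mem_verts_toSubgraph.mpr ha) b).mpr hab'
    exact p.mem_verts_toSubgraph.mp (p.toSubgraph.edge_vert this.symm)
  · rw [Walk.edges_mapLe_eq_edges]
    intro e he
    exact (edgeSet_fromEdgeSet _ ▸ p.edges_subset_edgeSet he).1

theorem stmt2 [Fintype V] (G : SimpleGraph V) (hG : HasPM G) (S : Set (Sym2 V))
    (hS : S ⊆ G.edgeSet) :
    IsGFS G S ↔
      ∀ (v : V) (c : G.Walk v v), IsNiceCycle G c → ∃ e ∈ S, e ∈ c.edges := by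
  constructor
  · rintro ⟨-, hGFS⟩ v c hc
    by_contra! hcS
    obtain ⟨M₁, M₂, hM₁, hM₂, hne, hsub⟩ := hc.exists_isPM_ne hG
    refine hne (hGFS M₁ M₂ hM₁ hM₂ (Set.inter_eq_inter_iff_disjoint_symmDiff.mpr ?_))
    exact Set.disjoint_left.mpr fun e he heS => hcS e heS (hsub he)
  · refine fun hnice => ⟨hS, fun M M' hM hM' hMS => ?_⟩
    by_contra hne
    obtain ⟨v, c, hc, hsub⟩ := hM.exists_isNiceCycle_of_ne hM' hne
    obtain ⟨e, heS, hec⟩ := hnice v c hc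
    exact Set.disjoint_left.mp (Set.inter_eq_inter_iff_disjoint_symmDiff.mp hMS) (hsub hec) heS
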